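/- Let 1/2 < C ≤ 1. The symmetric profile (p*, p*) with p* = 1/(3C) + 1/3 is a Nash equilibrium of the two-player game with strategy sets (0,1] and payoffs U_R(p_R,p_B) = p_R − p_B + C·[p_B(2 − p_R − p_B) + p_R(1 − p_R)] and U_B(p_R,p_B) = p_B − p_R + C·[p_R(2 − p_R − p_B) + p_B(1 − p_B)], and moreover p* < 1 (segregation is mitigated). -/
import Mathlib


noncomputable def URarm (C pR pB : ℝ) : ℝ :=
  pR - pB + C * (pB * (2 - pR - pB) + pR * (1 - pR))

noncomputable def UBarm (C pR pB : ℝ) : ℝ :=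
  pB - pR + C * (pR * (2 - pR - pB) + pB * (1 - pB))

/-- For `1/2 < C ≤ 1`, `(p*, p*)` with `p* = 1/(3C) + 1/3` is a Nash equilibrium
of the ARM-augmented game, and `p* < 1`: segregation is mitigated. -/
theorem arm_nash_equilibrium (C : ℝ) (hC1 : 1/2 < C) (hC2 : C ≤ 1) :
    (1/(3*C) + 1/3) ∈ Set.Ioc (0:ℝ) 1 ∧
    (∀ p ∈ Set.Ioc (0:ℝ) 1,
      URarm C p (1/(3*C) + 1/3) ≤ URarm C (1/(3*C) + 1/3) (1/(3*C) + 1/3)) ∧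
    (∀ q ∈ Set.Ioc (0:ℝ) 1,
      UBarm C (1/(3*C) + 1/3) q ≤ UBarm C (1/(3*C) + 1/3) (1/(3*C) + 1/3)) ∧
    1/(3*C) + 1/3 < 1 := by
  have hC0 : (0:ℝ) < C := by linarith
  set s : ℝ := 1/(3*C) + 1/3 with hs_def
  have h3 : 3*C*s = 1 + C := by
    rw [hs_def]; field_simp
  have hlt : s < 1 := by
    rw [hs_def, div_add' _ _ _ (by positivity : (3*C) ≠ 0),
      div_lt_one (by positivity)]
    linarith
  have hpos : 0 < s := by rw [hs_def]; positivity
  refine ⟨⟨hpos, hlt.le⟩, ?_, ?_, hlt⟩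
  · intro p _
    have hid : URarm C s s - URarm C p s = C * (p - s)^2 := by
      simp only [URarm]; linear_combination (p - s) * h3
    nlinarith [mul_nonneg hC0.le (sq_nonneg (p - s))]
  · intro q _
    have hid : UBarm C s s - UBarm C s q = C * (q - s)^2 := by
      simp only [UBarm]; linear_combination (q - s) * h3
    nlinarith [mul_nonneg hC0.le (sq_nonneg (q - s))]
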